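/- Let k ≥ 5 and let τ be a non-trivial permutation of a set with exactly k elements. If a permutation σ of the same set commutes with every conjugate of τ (i.e. σ·(gτg⁻¹) = (gτg⁻¹)·σ for every permutation g), then σ is the identity permutation. -/

import Mathlib

/-!
The conjugates of `τ` generate a nontrivial normal subgroup of `Perm α`, which for `|α| ≥ 5`
contains the alternating group. So `σ` centralizes the alternating group, and for `|α| ≥ 4` that
centralizer is trivial: if `σ a ≠ a`, a 3-cycle `(a c d)` fixing `σ a` cannot commute with `σ`.
-/

open Equiv Equiv.Perm Subgroup

theorem Subgroup.normalClosure_singleton_le_centralizer {G : Type*} [Group G] {g h : G}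
    (hcomm : ∀ x : G, g * (x * h * x⁻¹) = x * h * x⁻¹ * g) :
    normalClosure {h} ≤ centralizer {g} := by
  refine closure_le _ |>.2 fun y hy ↦ ?_
  obtain ⟨_, rfl, hconj⟩ := Group.mem_conjugatesOfSet_iff.1 hy
  obtain ⟨x, rfl⟩ := isConj_iff.1 hconj
  exact mem_centralizer_singleton_iff.2 (hcomm x).symm

theorem Equiv.Perm.centralizer_alternatingGroup_eq_bot {α : Type*} [Fintype α] [DecidableEq α]
    (h4 : 4 ≤ Nat.card α) : centralizer (alternatingGroup α : Set (Perm α)) = ⊥ := by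
  refine eq_bot_iff.2 fun σ hσ ↦ mem_bot.2 <| Perm.ext fun a ↦ ?_
  rw [Perm.one_apply]
  by_contra ha
  obtain ⟨c, d, hc, hd, hcd⟩ :
      ∃ c d, c ∈ ({a, σ a} : Finset α)ᶜ ∧ d ∈ ({a, σ a} : Finset α)ᶜ ∧ c ≠ d := by
    rw [← Finset.one_lt_card_iff, Finset.card_compl, Finset.card_pair (Ne.symm ha)]
    rw [Nat.card_eq_fintype_card] at h4
    omega
  simp only [Finset.mem_compl, Finset.mem_insert, Finset.mem_singleton, not_or] at hc hd
  set κ := swap a c * swap c d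
  have hκ : κ ∈ alternatingGroup α := by
    simp [κ, mem_alternatingGroup, sign_swap (Ne.symm hc.1), sign_swap hcd]
  have hκa : κ a = c := by simp [κ, swap_apply_of_ne_of_ne (Ne.symm hc.1) (Ne.symm hd.1)]
  have hκσa : κ (σ a) = σ a := by
    simp [κ, swap_apply_of_ne_of_ne (Ne.symm hc.2) (Ne.symm hd.2),
      swap_apply_of_ne_of_ne ha (Ne.symm hc.2)]
  have h := congrArg (· a) (mem_centralizer_iff.1 hσ κ hκ)
  simp only [Perm.mul_apply, hκa, hκσa] at h
  exact hc.1 (σ.injective h).symm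

/-- Let `k ≥ 5` and let `τ` be a non-trivial permutation of a set with exactly `k`
elements. If a permutation `σ` of the same set commutes with every conjugate of `τ`,
then `σ` is the identity permutation. -/
theorem perm_eq_one_of_commute_all_conjugates
    {α : Type*} [Fintype α] (k : ℕ) (hk : 5 ≤ k) (hcard : Fintype.card α = k)
    (τ σ : Equiv.Perm α) (hτ : τ ≠ 1)
    (hcomm : ∀ g : Equiv.Perm α, σ * (g * τ * g⁻¹) = (g * τ * g⁻¹) * σ) :
    σ = 1 := by
  classical
  have h5 : 5 ≤ Nat.card α := by rwa [Nat.card_eq_fintype_card, hcard]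
  have hN : Nontrivial (normalClosure {τ}) :=
    (nontrivial_iff_ne_bot _).2 fun h ↦
      hτ <| by simpa [h] using subset_normalClosure (rfl : τ ∈ {τ})
  have hA : alternatingGroup α ≤ centralizer {σ} :=
    (alternatingGroup_le_of_normal h5 hN).trans (normalClosure_singleton_le_centralizer hcomm)
  have hσ : σ ∈ centralizer (alternatingGroup α : Set (Perm α)) :=
    mem_centralizer_iff.2 fun κ hκ ↦ mem_centralizer_singleton_iff.1 (hA hκ)
  rwa [centralizer_alternatingGroup_eq_bot (by omega), mem_bot] at hσ
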